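/- Let Ω ⊆ ℝ^d be open, let A be a solid subring of the ring of functions (0,1] → ℝ, and let I be an ideal of A that is solid in the sense that whenever s : (0,1] → ℝ and r ∈ I satisfy |s(ε)| ≤ |r(ε)| for all ε, then s ∈ I. Let H(Ω) be the set of families (u_ε)_{ε∈(0,1]} of smooth functions on Ω with (ε ↦ p_{K,l}(u_ε)) ∈ A for all compact K ⊆ Ω and all l ∈ ℕ, and let J(Ω) be the set of families with (ε ↦ p_{K,l}(u_ε)) ∈ I for all such K, l. Then J(Ω) is closed under addition, and for every (u_ε) ∈ H(Ω) and (η_ε) ∈ J(Ω) the pointwise product family (u_ε · η_ε) belongs to J(Ω). -/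

import Mathlib

open Filter Topology

noncomputable section

/-- `p_{K,l}(f)`: sup over `x ∈ K` and `0 ≤ i ≤ l` of `‖iteratedFDeriv ℝ i f x‖`. -/
def pKl {d : ℕ} (K : Set (Fin d → ℝ)) (l : ℕ) (f : (Fin d → ℝ) → ℝ) : ℝ :=
  ⨆ x : K, ⨆ i : Fin (l + 1), ‖iteratedFDeriv ℝ i.1 f x.1‖

lemma pKl_nonneg {d : ℕ} (K : Set (Fin d → ℝ)) (l : ℕ) (f : (Fin d → ℝ) → ℝ) :
    0 ≤ pKl K l f :=
  Real.iSup_nonneg fun _ => Real.iSup_nonneg fun _ => norm_nonneg _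

lemma norm_le_pKl {d : ℕ} {K : Set (Fin d → ℝ)} (hK : IsCompact K) {l : ℕ}
    {f : (Fin d → ℝ) → ℝ} (hf : ContDiff ℝ (⊤ : ℕ∞) f) (x : K) (i : Fin (l + 1)) :
    ‖iteratedFDeriv ℝ i.1 f x.1‖ ≤ pKl K l f := by
  have hM : ∀ j : Fin (l + 1), ∃ M : ℝ, ∀ y ∈ K, ‖iteratedFDeriv ℝ j.1 f y‖ ≤ M := by
    intro j
    exact hK.exists_bound_of_continuousOn
      ((hf.continuous_iteratedFDeriv (m := j.1) (by exact_mod_cast le_top)).continuousOn)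
  choose M hMle using hM
  set B : ℝ := ∑ j : Fin (l + 1), max (M j) 0 with hB
  have hbdd : BddAbove (Set.range fun y : K => ⨆ j : Fin (l + 1), ‖iteratedFDeriv ℝ j.1 f y.1‖) := by
    refine ⟨B, Set.forall_mem_range.2 fun y => ?_⟩
    refine Real.iSup_le (fun j => ?_) ?_
    · calc ‖iteratedFDeriv ℝ j.1 f y.1‖ ≤ M j := hMle j y.1 y.2
        _ ≤ max (M j) 0 := le_max_left _ _
        _ ≤ B := Finset.single_le_sum (fun k _ => le_max_right (M k) 0) (Finset.mem_univ j)
    · exact Finset.sum_nonneg fun k _ => le_max_right _ _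
  calc ‖iteratedFDeriv ℝ i.1 f x.1‖
      ≤ ⨆ j : Fin (l + 1), ‖iteratedFDeriv ℝ j.1 f x.1‖ :=
        le_ciSup (f := fun j : Fin (l+1) => ‖iteratedFDeriv ℝ j.1 f x.1‖)
          (Set.Finite.bddAbove (Set.finite_range _)) i
    _ ≤ pKl K l f := le_ciSup hbdd x

/-- `J(Ω)` is closed under addition, and `H(Ω) · J(Ω) ⊆ J(Ω)`. -/
theorem J_ideal_of_H {d : ℕ} (Ω : Set (Fin d → ℝ)) (hΩ : IsOpen Ω)
    (A : Subring (Set.Ioc (0:ℝ) 1 → ℝ))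
    (hAsolid : ∀ s r : Set.Ioc (0:ℝ) 1 → ℝ, r ∈ A → (∀ ε, |s ε| ≤ |r ε|) → s ∈ A)
    (I : Set (Set.Ioc (0:ℝ) 1 → ℝ))
    (hIA : I ⊆ (A : Set (Set.Ioc (0:ℝ) 1 → ℝ)))
    (hIadd : ∀ a ∈ I, ∀ b ∈ I, a + b ∈ I)
    (hImul : ∀ a ∈ (A : Set (Set.Ioc (0:ℝ) 1 → ℝ)), ∀ b ∈ I, a * b ∈ I)
    (hIsolid : ∀ s r : Set.Ioc (0:ℝ) 1 → ℝ, r ∈ I → (∀ ε, |s ε| ≤ |r ε|) → s ∈ I)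
    (u η θ : Set.Ioc (0:ℝ) 1 → (Fin d → ℝ) → ℝ)
    (hu_smooth : ∀ ε, ContDiff ℝ (⊤ : ℕ∞) (u ε))
    (hη_smooth : ∀ ε, ContDiff ℝ (⊤ : ℕ∞) (η ε))
    (hθ_smooth : ∀ ε, ContDiff ℝ (⊤ : ℕ∞) (θ ε))
    (hu : ∀ K ⊆ Ω, IsCompact K → ∀ l : ℕ, (fun ε => pKl K l (u ε)) ∈ A)
    (hη : ∀ K ⊆ Ω, IsCompact K → ∀ l : ℕ, (fun ε => pKl K l (η ε)) ∈ I)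
    (hθ : ∀ K ⊆ Ω, IsCompact K → ∀ l : ℕ, (fun ε => pKl K l (θ ε)) ∈ I) :
    (∀ K ⊆ Ω, IsCompact K → ∀ l : ℕ, (fun ε => pKl K l (fun y => η ε y + θ ε y)) ∈ I) ∧
    (∀ K ⊆ Ω, IsCompact K → ∀ l : ℕ, (fun ε => pKl K l (fun y => u ε y * η ε y)) ∈ I) := by
  constructor
  · intro K hKΩ hK l
    refine hIsolid _ _ (hIadd _ (hη K hKΩ hK l) _ (hθ K hKΩ hK l)) fun ε => ?_
    have h1 : (0:ℝ) ≤ pKl K l (η ε) + pKl K l (θ ε) :=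
      add_nonneg (pKl_nonneg _ _ _) (pKl_nonneg _ _ _)
    rw [abs_of_nonneg (pKl_nonneg _ _ _)]
    rw [show |((fun ε => pKl K l (η ε)) + fun ε => pKl K l (θ ε)) ε| = pKl K l (η ε) + pKl K l (θ ε)
      from abs_of_nonneg h1]
    refine Real.iSup_le (fun x => Real.iSup_le (fun i => ?_) h1) h1
    have heq : iteratedFDeriv ℝ i.1 (fun y => η ε y + θ ε y) x.1
        = iteratedFDeriv ℝ i.1 (η ε) x.1 + iteratedFDeriv ℝ i.1 (θ ε) x.1 := by
      have := iteratedFDeriv_add_apply (x := x.1)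
        ((hη_smooth ε).of_le (by exact_mod_cast le_top) : ContDiff ℝ i.1 (η ε)).contDiffAt
        ((hθ_smooth ε).of_le (by exact_mod_cast le_top) : ContDiff ℝ i.1 (θ ε)).contDiffAt
      exact this
    rw [heq]
    exact (norm_add_le _ _).trans
      (add_le_add (norm_le_pKl hK (hη_smooth ε) x i) (norm_le_pKl hK (hθ_smooth ε) x i))
  · intro K hKΩ hK l
    set r : Set.Ioc (0:ℝ) 1 → ℝ :=
      fun ε => (2:ℝ)^l * (pKl K l (u ε) * pKl K l (η ε)) with hr
    have hrI : r ∈ I := by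
      have hc : (fun _ : Set.Ioc (0:ℝ) 1 => (2:ℝ)^l) ∈ A := by
        have : ((2^l : ℕ) : Set.Ioc (0:ℝ) 1 → ℝ) ∈ A := natCast_mem A _
        convert this using 1
        funext ε
        push_cast
        rfl
      exact hImul _ hc _ (hImul _ (hu K hKΩ hK l) _ (hη K hKΩ hK l))
    refine hIsolid _ r hrI fun ε => ?_
    have hrn : 0 ≤ r ε :=
      mul_nonneg (by positivity) (mul_nonneg (pKl_nonneg _ _ _) (pKl_nonneg _ _ _))
    rw [abs_of_nonneg (pKl_nonneg _ _ _), abs_of_nonneg hrn]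
    refine Real.iSup_le (fun x => Real.iSup_le (fun i => ?_) hrn) hrn
    have hbd : ‖iteratedFDeriv ℝ i.1 (fun y => u ε y * η ε y) x.1‖
        ≤ ∑ k ∈ Finset.range (i.1 + 1),
          (i.1.choose k : ℝ) * ‖iteratedFDeriv ℝ k (u ε) x.1‖
            * ‖iteratedFDeriv ℝ (i.1 - k) (η ε) x.1‖ := by
      have := norm_iteratedFDeriv_mul_le (𝕜 := ℝ) (f := u ε) (g := η ε)
        ((hu_smooth ε).of_le (by exact_mod_cast le_top) : ContDiff ℝ i.1 (u ε))
        ((hη_smooth ε).of_le (by exact_mod_cast le_top) : ContDiff ℝ i.1 (η ε)) x.1 (mod_cast le_refl i.1)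
      simpa [Pi.mul_def] using this
    refine hbd.trans ?_
    have hstep : ∀ k ∈ Finset.range (i.1 + 1),
        (i.1.choose k : ℝ) * ‖iteratedFDeriv ℝ k (u ε) x.1‖
          * ‖iteratedFDeriv ℝ (i.1 - k) (η ε) x.1‖
        ≤ (i.1.choose k : ℝ) * (pKl K l (u ε) * pKl K l (η ε)) := by
      intro k hk
      rw [Finset.mem_range] at hk
      have hki : k ≤ i.1 := Nat.lt_succ_iff.mp hk
      have hk1 : k < l + 1 := lt_of_le_of_lt hki i.2
      have hk2 : i.1 - k < l + 1 := lt_of_le_of_lt (Nat.sub_le _ _) i.2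
      have h1 := norm_le_pKl hK (hu_smooth ε) x ⟨k, hk1⟩
      have h2 := norm_le_pKl hK (hη_smooth ε) x ⟨i.1 - k, hk2⟩
      have := mul_le_mul h1 h2 (norm_nonneg _) (pKl_nonneg _ _ _)
      calc (i.1.choose k : ℝ) * ‖iteratedFDeriv ℝ k (u ε) x.1‖
            * ‖iteratedFDeriv ℝ (i.1 - k) (η ε) x.1‖
          = (i.1.choose k : ℝ) * (‖iteratedFDeriv ℝ k (u ε) x.1‖
            * ‖iteratedFDeriv ℝ (i.1 - k) (η ε) x.1‖) := by ring
        _ ≤ (i.1.choose k : ℝ) * (pKl K l (u ε) * pKl K l (η ε)) := by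
            exact mul_le_mul_of_nonneg_left this (by positivity)
    refine (Finset.sum_le_sum hstep).trans ?_
    rw [← Finset.sum_mul]
    have hsum : (∑ k ∈ Finset.range (i.1 + 1), (i.1.choose k : ℝ)) = (2:ℝ)^i.1 := by
      rw [← Nat.cast_sum, Nat.sum_range_choose]
      push_cast; ring
    rw [hsum, hr]
    have h2l : (2:ℝ)^i.1 ≤ (2:ℝ)^l :=
      pow_le_pow_right₀ one_le_two (Nat.lt_succ_iff.mp i.2)
    exact mul_le_mul_of_nonneg_right h2l
      (mul_nonneg (pKl_nonneg _ _ _) (pKl_nonneg _ _ _))
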